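/- Let k ≥ 3 and 1 ≤ m ≤ k−2 be integers, and define γ₂(k,m) = −(k−m)·ln 2 + √((k−m)²(ln 2)² + 2(k−m)(2^k − 2^{k−m−1})·ln 2). Then for every integer n with 2^k − 2^{k−m−1} − 2^{k−m−2} < n ≤ 2^k − 2^{k−m−1} − γ₂(k,m), the code S_{n,k} is ugly (not satisfactory). -/

import Mathlib

open Finset

/-- The value of column `j` (0-indexed) of the matrix
`H_k = [H_k^(k-1) | H_k^(k-2) | … | H_k^(0)]`, read as a `k`-bit integer with
row 1 as the most significant bit.  (Column `c` of the block `H_k^(m)` is the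
vector `(0,…,0,1,binary_m(c))`, i.e. the integer `2^m + c`; the block `H_k^(m)`
occupies global columns `[2^k - 2^(m+1), 2^k - 2^m)`, so that
`m = ⌊log₂ (2^k - 1 - j)⌋` and the value is `3·2^m + j - 2^k`.) -/
def colVal (k j : ℕ) : ℕ := 3 * 2 ^ Nat.log2 (2 ^ k - 1 - j) + j - 2 ^ k

/-- Row `i` (1-indexed, `1 ≤ i ≤ k`) of the matrix `H_k(n)` consisting of the
first `n` columns of `H_k`. -/
def Hrow (k n : ℕ) (i : ℕ) : Fin n → ZMod 2 :=
  fun j => if Nat.testBit (colVal k j) (k - i) then 1 else 0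

/-- The code `S_{n,k}`: the binary linear code spanned by the rows of `H_k(n)`. -/
def SCode (k n : ℕ) : Submodule (ZMod 2) (Fin n → ZMod 2) :=
  Submodule.span (ZMod 2) (Set.range fun i : Fin k => Hrow k n ((i : ℕ) + 1))

/-- `w_i`: the Hamming weight of the `i`-th (1-indexed) row of `H_k(n)`. -/
def rowWt (k n i : ℕ) : ℕ := hammingNorm (Hrow k n i)

/-- `α_i`: the `i`-th entry (1-indexed) of the last (`n`-th) column of `H_k(n)`;
`true` encodes `1` and `false` encodes `0`. -/
def alphaBit (k n i : ℕ) : Bool := Nat.testBit (colVal k (n - 1)) (k - i)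

/-- Row `i` (1-indexed) of the matrix `M_{n,k}`, whose `j`-th column
(0-indexed) is the `k`-bit binary representation of `2^k - 1 - j`, MSB first. -/
def Mrow (k n : ℕ) (i : ℕ) : Fin n → ZMod 2 :=
  fun j => if Nat.testBit (2 ^ k - 1 - (j : ℕ)) (k - i) then 1 else 0

/-- The code `D_{n,k}`: the binary linear code spanned by the rows of `M_{n,k}`. -/
def DCode (k n : ℕ) : Submodule (ZMod 2) (Fin n → ZMod 2) :=
  Submodule.span (ZMod 2) (Set.range fun i : Fin k => Mrow k n ((i : ℕ) + 1))

/-- The value of column `j` (0-indexed) of the generalized matrix consisting of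
`t-1` copies of `H_k^(k-1)` followed by `H_k(n')`, where `n = 2^(k-1)·(t-1) + n'`
with `2^(k-1) ≤ n' ≤ 2^k - 1` (so `t - 1 = (n - 2^(k-1)) / 2^(k-1)`). -/
def gcolVal (k n j : ℕ) : ℕ :=
  if j < (n - 2 ^ (k - 1)) / 2 ^ (k - 1) * 2 ^ (k - 1) then
    2 ^ (k - 1) + j % 2 ^ (k - 1)
  else colVal k (j - (n - 2 ^ (k - 1)) / 2 ^ (k - 1) * 2 ^ (k - 1))

/-- The generalized code `S_{n,k}`, defined for every `n ≥ 2^(k-1)`: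
the span of the rows of the `k × n` matrix obtained by concatenating `t-1`
copies of `H_k^(k-1)` followed by `H_k(n')`. -/
def GSCode (k n : ℕ) : Submodule (ZMod 2) (Fin n → ZMod 2) :=
  Submodule.span (ZMod 2)
    (Set.range fun i : Fin k => fun j : Fin n =>
      if Nat.testBit (gcolVal k n (j : ℕ)) (k - ((i : ℕ) + 1)) then (1 : ZMod 2) else 0)

/-- The minimum distance of a binary linear code: the least Hamming weight of a
nonzero codeword. -/
noncomputable def minDist {n : ℕ} (C : Submodule (ZMod 2) (Fin n → ZMod 2)) : ℕ :=
  sInf {w | ∃ c ∈ C, c ≠ 0 ∧ hammingNorm c = w}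

/-- `A_w`: the number of codewords of `C` of Hamming weight `w`. -/
noncomputable def numWt {n : ℕ} (C : Submodule (ZMod 2) (Fin n → ZMod 2)) (w : ℕ) : ℕ :=
  Set.ncard {c : Fin n → ZMod 2 | c ∈ C ∧ hammingNorm c = w}

/-- The undetected error probability
`P_ue(C,p) = Σ_{w=1}^n A_w p^w (1-p)^(n-w)`. -/
noncomputable def Pue {n : ℕ} (C : Submodule (ZMod 2) (Fin n → ZMod 2)) (p : ℝ) : ℝ :=
  ∑ w ∈ Finset.Icc 1 n, (numWt C w : ℝ) * p ^ w * (1 - p) ^ (n - w)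

/-- A code is proper if `p ↦ P_ue(C,p)` is monotonically increasing on `[0, 1/2]`. -/
def IsProper {n : ℕ} (C : Submodule (ZMod 2) (Fin n → ZMod 2)) : Prop :=
  MonotoneOn (Pue C) (Set.Icc (0 : ℝ) (1 / 2))

/-- An `[n,k]` code is satisfactory if `P_ue(C,p) ≤ 2^(k-n)` for all `p ∈ [0,1/2]`. -/
def IsSatisfactory (k : ℕ) {n : ℕ} (C : Submodule (ZMod 2) (Fin n → ZMod 2)) : Prop :=
  ∀ p ∈ Set.Icc (0 : ℝ) (1 / 2), Pue C p ≤ (2 : ℝ) ^ ((k : ℤ) - (n : ℤ))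

/-- The binary entropy function `h(x) = -x log₂ x - (1-x) log₂ (1-x)`. -/
noncomputable def binEnt (x : ℝ) : ℝ :=
  -(x * Real.logb 2 x) - (1 - x) * Real.logb 2 (1 - x)

/-- `U_m = (2^(m+2) - 3)·(1 - h((2^(m+1) - 2)/(2^(m+2) - 3)))`. -/
noncomputable def Ufun (m : ℕ) : ℝ :=
  ((2 : ℝ) ^ (m + 2) - 3) * (1 - binEnt (((2 : ℝ) ^ (m + 1) - 2) / ((2 : ℝ) ^ (m + 2) - 3)))


/-!
Write `k = m + 2 + t`, so that the block `H_k^(t+1)` is the one cut by `n`, say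
`n = 2^k - 2^(t+2) + r` with `2^t < r < 2^(t+1)`. For every message `x` whose low `t + 2` bits are
`0…010…0` (only bit `t` set) the codeword `x·H_k(n)` has the same weight
`w = 2^(k-1) - 2^(t+1) + (r - 2^t)`: on each complete block `H_k^(b)`, `b > t + 1`, the inner
product with the columns is balanced, and on the cut block it is the bit `t` of the column
index. There are `2^m` such messages, giving `2^m` distinct codewords of weight `w`. Now
`n = 2w + s` with `s = 2^k - 2^(t+1) - n`, and at `p = w / n` binary Pinsker gives
`log (2^m p^w (1-p)^(n-w) / 2^(k-n)) > s² / (2n) - (t + 2) log 2`, which is nonnegative exactly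
when `s ≥ γ₂(k,m)`.
-/

def bitDot (k x v : ℕ) : ZMod 2 :=
  ∑ b ∈ range k, if x.testBit b ∧ v.testBit b then 1 else 0

section bitDot

variable {k x : ℕ}

lemma bitDot_comm (k x v : ℕ) : bitDot k x v = bitDot k v x := by
  simp only [bitDot, and_comm]

lemma bitDot_xor (k x u v : ℕ) : bitDot k x (u ^^^ v) = bitDot k x u + bitDot k x v := by
  rw [bitDot, bitDot, bitDot, ← sum_add_distrib]
  refine sum_congr rfl fun b _ => ?_
  rw [Nat.testBit_xor]
  cases x.testBit b <;> cases u.testBit b <;> cases v.testBit b <;> decide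

lemma bitDot_two_pow {b : ℕ} (hb : b < k) (x : ℕ) :
    bitDot k x (2 ^ b) = if x.testBit b then 1 else 0 := by
  rw [bitDot, sum_eq_single_of_mem b (mem_range.mpr hb)]
  · simp
  · intro b' _ hb'
    simp [Nat.testBit_two_pow_of_ne (Ne.symm hb')]

lemma bitDot_mod_two_pow {c v : ℕ} (hv : v < 2 ^ c) (x : ℕ) :
    bitDot k x v = bitDot k (x % 2 ^ c) v := by
  refine sum_congr rfl fun b _ => ?_
  rw [Nat.testBit_mod_two_pow]
  by_cases hbc : b < c
  · simp [hbc]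
  · have : v.testBit b = false :=
      Nat.testBit_lt_two_pow (hv.trans_le (Nat.pow_le_pow_right two_pos (by omega)))
    simp [this]

lemma two_pow_mul_add_eq_xor {i c : ℕ} (hc : c < 2 ^ i) (a : ℕ) :
    2 ^ i * a + c = 2 ^ i * a ^^^ c := by
  refine Nat.eq_of_testBit_eq fun j => ?_
  rw [Nat.testBit_two_pow_mul_add a hc, Nat.testBit_xor, Nat.testBit_two_pow_mul]
  by_cases hj : j < i
  · simp [hj, Nat.not_le_of_lt hj]
  · have : c.testBit j = false :=
      Nat.testBit_lt_two_pow (hc.trans_le (Nat.pow_le_pow_right two_pos (by omega)))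
    simp [hj, Nat.le_of_not_lt hj, this]

lemma card_filter_bitDot_eq {t ℓ : ℕ} (hℓk : ℓ < k) (hℓt : ℓ < t) (hx : x.testBit ℓ)
    (ε : ZMod 2) : #{v ∈ range (2 ^ t) | bitDot k x v = ε} = 2 ^ (t - 1) := by
  have hflip : ∀ v, bitDot k x (v ^^^ 2 ^ ℓ) = bitDot k x v + 1 := fun v => by
    rw [bitDot_xor, bitDot_two_pow hℓk, if_pos hx]
  have hℓ : 2 ^ ℓ < 2 ^ t := Nat.pow_lt_pow_right one_lt_two hℓt
  have hswap : ∀ δ : ZMod 2,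
      #{v ∈ range (2 ^ t) | bitDot k x v = δ} = #{v ∈ range (2 ^ t) | bitDot k x v = δ + 1} :=
    fun δ => card_nbij' (· ^^^ 2 ^ ℓ) (· ^^^ 2 ^ ℓ)
      (fun v hv => by
        simp only [coe_filter, mem_range, Set.mem_ofPred_eq] at hv ⊢
        exact ⟨Nat.xor_lt_two_pow hv.1 hℓ, by rw [hflip, hv.2]⟩)
      (fun v hv => by
        simp only [coe_filter, mem_range, Set.mem_ofPred_eq] at hv ⊢
        refine ⟨Nat.xor_lt_two_pow hv.1 hℓ, ?_⟩
        rw [hflip, hv.2, add_assoc, show (1 : ZMod 2) + 1 = 0 from rfl, add_zero])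
      (fun v _ => by simp)
      (fun v _ => by simp)
  have hsplit := card_filter_add_card_filter_not (s := range (2 ^ t))
    (p := fun v => bitDot k x v = ε)
  have hne : ∀ a b : ZMod 2, ¬a = b ↔ a = b + 1 := by decide
  simp only [hne, card_range, ← hswap] at hsplit
  have : 2 ^ t = 2 * 2 ^ (t - 1) := by rw [← pow_succ']; congr 1; omega
  omega

end bitDot

lemma colVal_block {k b c : ℕ} (hb : b < k) (hc : c < 2 ^ b) :
    colVal k (2 ^ k - 2 ^ (b + 1) + c) = 2 ^ b + c := by
  have hbk : 2 ^ (b + 1) ≤ 2 ^ k := Nat.pow_le_pow_right two_pos hb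
  have hpow : 2 ^ (b + 1) = 2 * 2 ^ b := pow_succ' 2 b
  have hlog : Nat.log2 (2 ^ k - 1 - (2 ^ k - 2 ^ (b + 1) + c)) = b := by
    rw [Nat.log2_eq_log_two]
    apply Nat.log_eq_of_pow_le_of_lt_pow <;> omega
  rw [colVal, hlog]
  omega

/-- Bit `k - i` of the message `x` is the coefficient of row `i` of `H_k(n)`. -/
def codeword (k n x : ℕ) : Fin n → ZMod 2 := fun j => bitDot k x (colVal k j)

section codeword

variable {k n : ℕ}

lemma codeword_mem_SCode (x : ℕ) : codeword k n x ∈ SCode k n := by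
  have hsum : codeword k n x = ∑ b ∈ range k with x.testBit b, Hrow k n (k - b) := by
    funext j
    rw [Finset.sum_apply, sum_filter, codeword, bitDot]
    refine Finset.sum_congr rfl fun b hb => ?_
    rw [Hrow, Nat.sub_sub_self (mem_range.mp hb).le]
    by_cases hxb : x.testBit b <;> simp [hxb]
  rw [hsum]
  refine Submodule.sum_mem _ fun b hb => ?_
  have hbk : b < k := mem_range.mp (mem_filter.mp hb).1
  refine Submodule.subset_span ⟨⟨k - b - 1, by omega⟩, ?_⟩
  simp only [show k - b - 1 + 1 = k - b by omega]

lemma hammingNorm_codeword (x : ℕ) :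
    hammingNorm (codeword k n x) = #{j ∈ range n | bitDot k x (colVal k j) = 1} := by
  have hne : ∀ a : ZMod 2, a ≠ 0 ↔ a = 1 := by decide
  simp only [hammingNorm, codeword, hne, card_filter]
  exact Fin.sum_univ_eq_sum_range (fun j => if bitDot k x (colVal k j) = 1 then 1 else 0) n

/-- The column with value `2^b` sits at the start of the block `H_k^(b)`. -/
lemma testBit_eq_of_codeword_eq {x y b : ℕ} (h : codeword k n x = codeword k n y) (hb : b < k)
    (hn : 2 ^ k - 2 ^ (b + 1) < n) : x.testBit b = y.testBit b := by
  have hj := congrFun h ⟨2 ^ k - 2 ^ (b + 1), hn⟩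
  have hcol := colVal_block (c := 0) hb (Nat.two_pow_pos b)
  simp only [add_zero] at hcol
  simp only [codeword, hcol, bitDot_two_pow hb] at hj
  cases hx : x.testBit b <;> cases hy : y.testBit b <;> simp_all

end codeword

lemma card_filter_range_add (P : ℕ → Prop) [DecidablePred P] (a c : ℕ) :
    #{j ∈ range (a + c) | P j} = #{j ∈ range a | P j} + #{i ∈ range c | P (a + i)} := by
  simp only [card_filter, sum_range_add]

lemma testBit_iff_two_pow_le {t i : ℕ} (hi : i < 2 ^ (t + 1)) : i.testBit t ↔ 2 ^ t ≤ i := by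
  refine ⟨Nat.ge_two_pow_of_testBit, fun h => ?_⟩
  have hpow : 2 ^ (t + 1) = 2 * 2 ^ t := pow_succ' 2 t
  obtain ⟨c, rfl⟩ : ∃ c, i = 2 ^ t + c := ⟨i - 2 ^ t, by omega⟩
  rw [Nat.testBit_two_pow_add_eq, Nat.testBit_lt_two_pow (by omega : c < 2 ^ t)]
  rfl

section weight

variable {k x t : ℕ}

lemma card_ones_block (hxt : x.testBit t) {b : ℕ} (htb : t < b) (hbk : b < k) :
    #{c ∈ range (2 ^ b) | bitDot k x (colVal k (2 ^ k - 2 ^ (b + 1) + c)) = 1} = 2 ^ (b - 1) := by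
  have hshift : ∀ a y : ZMod 2, a + y = 1 ↔ y = 1 + a := by decide
  rw [filter_congr fun c hc => by
    rw [colVal_block hbk (mem_range.mp hc), ← mul_one (2 ^ b),
      two_pow_mul_add_eq_xor (mem_range.mp hc), bitDot_xor, mul_one, bitDot_two_pow hbk, hshift]]
  exact card_filter_bitDot_eq (htb.trans hbk) htb hxt _

/-- The complete blocks `H_k^(k-1), …, H_k^(k-d)`. -/
lemma card_ones_complete_blocks (hxt : x.testBit t) :
    ∀ d, t + 1 + d ≤ k →
      #{j ∈ range (2 ^ k - 2 ^ (k - d)) | bitDot k x (colVal k j) = 1} =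
        2 ^ (k - 1) - 2 ^ (k - d - 1)
  | 0, _ => by simp
  | d + 1, hd => by
    set b := k - d - 1 with hb
    have hpow : 2 ^ (b + 1) = 2 * 2 ^ b := pow_succ' 2 b
    have hpow' : 2 ^ b = 2 * 2 ^ (b - 1) := by rw [← pow_succ']; congr 1; omega
    have hbk : 2 ^ (b + 1) ≤ 2 ^ k := Nat.pow_le_pow_right two_pos (by omega)
    have hbk' : 2 ^ b ≤ 2 ^ (k - 1) := Nat.pow_le_pow_right two_pos (by omega)
    have hsplit : 2 ^ k - 2 ^ (k - (d + 1)) = 2 ^ k - 2 ^ (b + 1) + 2 ^ b := by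
      rw [show k - (d + 1) = b by omega]; omega
    rw [hsplit, card_filter_range_add, card_ones_block hxt (by omega) (by omega),
      show b + 1 = k - d by omega, card_ones_complete_blocks hxt d (by omega), ← hb,
      show k - (d + 1) - 1 = b - 1 by omega]
    omega

/-- On the cut block `H_k^(t+1)` a message that is `2^t` modulo `2^(t+2)` reads off bit `t` of
the column index. -/
lemma card_ones_cut_block (htk : t + 2 ≤ k) (hx : x % 2 ^ (t + 2) = 2 ^ t) {r : ℕ}
    (hr : r ≤ 2 ^ (t + 1)) :
    #{i ∈ range r | bitDot k x (colVal k (2 ^ k - 2 ^ (t + 2) + i)) = 1} = r - 2 ^ t := by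
  have hpow : 2 ^ (t + 2) = 2 * 2 ^ (t + 1) := pow_succ' 2 (t + 1)
  have hbit : ∀ i ∈ range r, bitDot k x (colVal k (2 ^ k - 2 ^ (t + 2) + i)) = 1 ↔ 2 ^ t ≤ i := by
    intro i hi
    have hi : i < 2 ^ (t + 1) := (mem_range.mp hi).trans_le hr
    rw [colVal_block (by omega) hi, bitDot_mod_two_pow (c := t + 2) (by omega), hx, bitDot_comm,
      bitDot_two_pow (by omega), Nat.testBit_two_pow_add_gt (Nat.lt_succ_self t),
      ← testBit_iff_two_pow_le hi]
    cases i.testBit t <;> decide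
  rw [filter_congr hbit, ← Nat.card_Ico (2 ^ t) r]
  congr 1
  ext i
  simp only [mem_filter, mem_range, mem_Ico]
  omega

lemma hammingNorm_codeword_eq (htk : t + 2 ≤ k) (hx : x % 2 ^ (t + 2) = 2 ^ t) {r : ℕ}
    (hr : r ≤ 2 ^ (t + 1)) :
    hammingNorm (codeword k (2 ^ k - 2 ^ (t + 2) + r) x) =
      2 ^ (k - 1) - 2 ^ (t + 1) + (r - 2 ^ t) := by
  have hxt : x.testBit t := by
    rw [← Nat.div_add_mod x (2 ^ (t + 2)), hx,
      Nat.testBit_two_pow_mul_add _ (Nat.pow_lt_pow_right one_lt_two (by omega)),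
      if_pos (by omega), Nat.testBit_two_pow_self]
  have hcomplete := card_ones_complete_blocks (k := k) hxt (k - t - 2) (by omega)
  rw [show k - (k - t - 2) = t + 2 by omega] at hcomplete
  rw [hammingNorm_codeword, card_filter_range_add, hcomplete, card_ones_cut_block htk hx hr]
  rfl

end weight

lemma card_le_numWt {ι : Type*} {n w : ℕ} {C : Submodule (ZMod 2) (Fin n → ZMod 2)}
    (s : Finset ι) (f : ι → Fin n → ZMod 2) (hf : Set.InjOn f s) (hC : ∀ a ∈ s, f a ∈ C)
    (hw : ∀ a ∈ s, hammingNorm (f a) = w) : #s ≤ numWt C w :=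
  calc #s = (f '' s).ncard := by rw [hf.ncard_image, Set.ncard_coe_finset]
    _ ≤ numWt C w := Set.ncard_le_ncard (by rintro _ ⟨a, ha, rfl⟩; exact ⟨hC a ha, hw a ha⟩)
        (Set.toFinite _)

/-- The `2^m` messages `2^(t+2) h + 2^t`, `h < 2^m`, give distinct codewords of equal weight. -/
lemma two_pow_le_numWt_SCode (m t : ℕ) {r : ℕ} (hr : r ≤ 2 ^ (t + 1)) :
    2 ^ m ≤ numWt (SCode (m + 2 + t) (2 ^ (m + 2 + t) - 2 ^ (t + 2) + r))
      (2 ^ (m + 1 + t) - 2 ^ (t + 1) + (r - 2 ^ t)) := by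
  set k := m + 2 + t
  have hlow : 2 ^ t < 2 ^ (t + 2) := Nat.pow_lt_pow_right one_lt_two (by omega)
  have hmsg : ∀ h, (2 ^ (t + 2) * h + 2 ^ t) % 2 ^ (t + 2) = 2 ^ t := fun h => by
    rw [Nat.mul_add_mod, Nat.mod_eq_of_lt hlow]
  have hinj : Set.InjOn (fun h => codeword k (2 ^ k - 2 ^ (t + 2) + r) (2 ^ (t + 2) * h + 2 ^ t))
      (range (2 ^ m) : Set ℕ) := by
    intro h₁ h₁m h₂ h₂m heq
    simp only [coe_range, Set.mem_Iio] at h₁m h₂m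
    refine Nat.eq_of_testBit_eq fun i => ?_
    by_cases him : i < m
    · have hcol : 2 ^ k - 2 ^ (t + 2 + i + 1) < 2 ^ k - 2 ^ (t + 2) + r := by
        have : 2 ^ (t + 2) < 2 ^ (t + 2 + i + 1) := Nat.pow_lt_pow_right one_lt_two (by omega)
        have : 2 ^ (t + 2 + i + 1) ≤ 2 ^ k := Nat.pow_le_pow_right two_pos (by omega)
        omega
      have hbit := testBit_eq_of_codeword_eq heq (by omega) hcol
      simpa [Nat.testBit_two_pow_mul_add _ hlow] using hbit
    · have hle : 2 ^ m ≤ 2 ^ i := Nat.pow_le_pow_right two_pos (by omega)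
      rw [Nat.testBit_lt_two_pow (h₁m.trans_le hle), Nat.testBit_lt_two_pow (h₂m.trans_le hle)]
  simpa [k] using card_le_numWt (range (2 ^ m)) _ hinj (fun h _ => codeword_mem_SCode _)
    (fun h _ => hammingNorm_codeword_eq (k := k) (by omega) (hmsg h) hr)

section analysis

open Real

lemma two_mul_lt_log_one_add_sub_log_one_sub {u : ℝ} (hu₀ : 0 < u) (hu₁ : u < 1) :
    2 * u < log (1 + u) - log (1 - u) := by
  have hsum := hasSum_log_sub_log_of_abs_lt_one (abs_lt.mpr ⟨by linarith, hu₁⟩)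
  have hle := sum_le_hasSum (range 2) (fun i _ => by positivity) hsum
  norm_num [sum_range_succ] at hle
  nlinarith [pow_pos hu₀ 3]

/-- Pinsker's inequality for a Bernoulli distribution against the uniform one. -/
lemma binEntropy_lt_log_two_sub_sq {p : ℝ} (hp₀ : 0 ≤ p) (hp₁ : p < 2⁻¹) :
    binEntropy p < log 2 - 2 * (p - 2⁻¹) ^ 2 := by
  have hmono : StrictMonoOn (fun q => binEntropy q + 2 * (q - 2⁻¹) ^ 2) (Set.Icc 0 2⁻¹) := by
    refine strictMonoOn_of_deriv_pos (convex_Icc _ _) (by fun_prop) fun q hq => ?_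
    rw [interior_Icc] at hq
    obtain ⟨hq₀, hq₁⟩ := hq
    have hd : HasDerivAt (fun q => binEntropy q + 2 * (q - 2⁻¹) ^ 2)
        (log (1 - q) - log q + 4 * (q - 2⁻¹)) q :=
      ((hasDerivAt_binEntropy hq₀.ne' (by linarith)).fun_add
        ((((hasDerivAt_id' q).sub_const 2⁻¹).fun_pow 2).const_mul 2)).congr_deriv (by ring)
    rw [hd.deriv]
    -- with `u = 1 - 2q` the derivative is `log (1 + u) - log (1 - u) - 2u`
    have hu := two_mul_lt_log_one_add_sub_log_one_sub (u := 1 - 2 * q) (by linarith) (by linarith)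
    rw [show 1 + (1 - 2 * q) = 2 * (1 - q) by ring, show 1 - (1 - 2 * q) = 2 * q by ring,
      log_mul two_ne_zero (by linarith), log_mul two_ne_zero hq₀.ne'] at hu
    linarith
  have := hmono ⟨hp₀, hp₁.le⟩ ⟨by norm_num, le_rfl⟩ hp₁
  simp only [binEntropy_two_inv, sub_self] at this
  linarith

end analysis

lemma numWt_mul_le_Pue {n : ℕ} (C : Submodule (ZMod 2) (Fin n → ZMod 2)) {w : ℕ} (hw : 1 ≤ w)
    (hwn : w ≤ n) {p : ℝ} (hp₀ : 0 ≤ p) (hp₁ : p ≤ 1) :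
    numWt C w * p ^ w * (1 - p) ^ (n - w) ≤ Pue C p := by
  have hq : 0 ≤ 1 - p := sub_nonneg.mpr hp₁
  exact single_le_sum (f := fun w => (numWt C w : ℝ) * p ^ w * (1 - p) ^ (n - w))
    (fun i _ => by positivity) (mem_Icc.mpr ⟨hw, hwn⟩)

/-- The witness is `p = w / n`. -/
lemma not_isSatisfactory_of_two_pow_le_numWt {k m n w s : ℕ}
    {C : Submodule (ZMod 2) (Fin n → ZMod 2)} (hn : n = 2 * w + s) (hw : 0 < w) (hs : 0 < s)
    (hC : 2 ^ m ≤ numWt C w) (hks : 2 * ((k : ℝ) - m) * Real.log 2 * n ≤ (s : ℝ) ^ 2) :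
    ¬ IsSatisfactory k C := by
  intro hsat
  have hn' : (n : ℝ) = 2 * w + s := by exact_mod_cast hn
  have hw' : (0 : ℝ) < w := by exact_mod_cast hw
  have hs' : (0 : ℝ) < s := by exact_mod_cast hs
  have hn₀ : (0 : ℝ) < n := by linarith
  set p : ℝ := w / n with hp
  have hnp : n * p = w := by rw [hp]; field_simp
  have hp₀ : 0 < p := by positivity
  have hp₁ : p < 2⁻¹ := by rw [hp, div_lt_iff₀ (by linarith)]; linarith
  have hq₀ : 0 < 1 - p := by linarith
  have hent : (w : ℝ) * Real.log p + ((n : ℝ) - w) * Real.log (1 - p) =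
      -n * Real.binEntropy p := by
    rw [Real.binEntropy, Real.log_inv, Real.log_inv, ← hnp]; ring
  have hpinsker := binEntropy_lt_log_two_sub_sq hp₀.le hp₁
  have hkm : ((k : ℝ) - m) * Real.log 2 ≤ n * (2 * (p - 2⁻¹) ^ 2) := by
    have hs_eq : (s : ℝ) = n * (1 - 2 * p) := by linarith
    refine le_of_mul_le_mul_right ?_ (by positivity : (0 : ℝ) < 2 * n)
    rw [hs_eq] at hks
    nlinarith
  have hlog : ((k : ℝ) - n) * Real.log 2 < Real.log (2 ^ m * p ^ w * (1 - p) ^ (n - w)) := by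
    rw [Real.log_mul (by positivity) (by positivity), Real.log_mul (by positivity) (by positivity),
      Real.log_pow, Real.log_pow, Real.log_pow, Nat.cast_sub (by omega), add_assoc, hent]
    nlinarith [mul_lt_mul_of_pos_left hpinsker hn₀]
  have hlt : (2 : ℝ) ^ ((k : ℤ) - n) < 2 ^ m * p ^ w * (1 - p) ^ (n - w) := by
    rw [← Real.log_lt_log_iff (by positivity) (by positivity), Real.log_zpow]
    push_cast
    exact hlog
  have hle : (2 : ℝ) ^ m * p ^ w * (1 - p) ^ (n - w) ≤ Pue C p := by
    refine le_trans ?_ (numWt_mul_le_Pue C hw (by omega) hp₀.le (by linarith))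
    gcongr
    exact_mod_cast hC
  linarith [hsat p ⟨hp₀.le, by linarith⟩]

/-- `γ₂(k,m) = gamma₂ ((k - m) log 2) (2^k - 2^(k-m-1))`. -/
noncomputable def gamma₂ (a N : ℝ) : ℝ := -a + √(a ^ 2 + 2 * a * N)

lemma gamma₂_pos {a N : ℝ} (ha : 0 < a) (hN : 0 < N) : 0 < gamma₂ a N := by
  have : a < √(a ^ 2 + 2 * a * N) := (Real.lt_sqrt ha.le).mpr (by nlinarith)
  rw [gamma₂]
  linarith

lemma two_mul_mul_sub_le_sq_of_gamma₂_le {a N s : ℝ} (h : gamma₂ a N ≤ s) :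
    2 * a * (N - s) ≤ s ^ 2 := by
  obtain ⟨-, hsq⟩ := Real.sqrt_le_iff.mp (show √(a ^ 2 + 2 * a * N) ≤ s + a by
    rw [gamma₂] at h; linarith)
  nlinarith

theorem stmt15_general (k m n : ℕ) (hm1 : 1 ≤ m) (hm2 : m ≤ k - 2)
    (hn1 : 2 ^ k - 2 ^ (k - m - 1) - 2 ^ (k - m - 2) < n)
    (hn2 : (n : ℝ) ≤ ((2 ^ k - 2 ^ (k - m - 1) : ℕ) : ℝ) -
        (-(((k : ℝ) - (m : ℝ)) * Real.log 2) +
          Real.sqrt (((k : ℝ) - (m : ℝ)) ^ 2 * Real.log 2 ^ 2 +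
            2 * ((k : ℝ) - (m : ℝ)) * ((2 ^ k - 2 ^ (k - m - 1) : ℕ) : ℝ) * Real.log 2))) :
    ¬ IsSatisfactory k (SCode k n) := by
  obtain ⟨t, rfl⟩ : ∃ t, k = m + 2 + t := ⟨k - m - 2, by omega⟩
  simp only [show m + 2 + t - m - 1 = t + 1 by omega, show m + 2 + t - m - 2 = t by omega]
    at hn1 hn2
  set N := 2 ^ (m + 2 + t) - 2 ^ (t + 1) with hN
  set a : ℝ := (((m + 2 + t : ℕ) : ℝ) - m) * Real.log 2
  have hγ : gamma₂ a N ≤ N - n := by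
    rw [gamma₂]
    convert le_sub_comm.mp hn2 using 3; ring
  have ha : 0 < a := mul_pos (by push_cast; linarith) (Real.log_pos one_lt_two)
  have hpow : 2 ^ (m + 2 + t) = 2 * 2 ^ (m + 1 + t) := by rw [← pow_succ']; ring_nf
  have hpow₁ : 2 ^ (t + 1) = 2 * 2 ^ t := pow_succ' 2 t
  have hpow₂ : 2 ^ (t + 2) = 2 * 2 ^ (t + 1) := pow_succ' 2 _
  have hpow₃ : 2 ^ (t + 2) ≤ 2 ^ (m + 1 + t) := Nat.pow_le_pow_right two_pos (by omega)
  have hpow₄ : 1 ≤ 2 ^ t := Nat.one_le_two_pow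
  have hnN : n < N := by
    have := gamma₂_pos ha (show (0 : ℝ) < N by exact_mod_cast (show 0 < N by omega))
    exact_mod_cast (show (n : ℝ) < N by linarith)
  obtain ⟨r, hr⟩ : ∃ r, n = 2 ^ (m + 2 + t) - 2 ^ (t + 2) + r :=
    ⟨n - (2 ^ (m + 2 + t) - 2 ^ (t + 2)), by omega⟩
  have hA := two_pow_le_numWt_SCode m t (r := r) (by omega)
  rw [← hr] at hA
  refine not_isSatisfactory_of_two_pow_le_numWt (s := N - n) (by omega) (by omega) (by omega) hA ?_
  have := two_mul_mul_sub_le_sq_of_gamma₂_le hγ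
  rw [Nat.cast_sub hnN.le]
  linarith

/-- With
`γ₂(k,m) = -(k-m)·ln 2 + √((k-m)²(ln 2)² + 2(k-m)(2^k - 2^(k-m-1))·ln 2)`, every
integer `n` with `2^k - 2^(k-m-1) - 2^(k-m-2) < n ≤ 2^k - 2^(k-m-1) - γ₂(k,m)`
yields an ugly (not satisfactory) code `S_{n,k}`. -/
theorem stmt15 (k m n : ℕ) (hk : 3 ≤ k) (hm1 : 1 ≤ m) (hm2 : m ≤ k - 2)
    (hn1 : 2 ^ k - 2 ^ (k - m - 1) - 2 ^ (k - m - 2) < n)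
    (hn2 : (n : ℝ) ≤ ((2 ^ k - 2 ^ (k - m - 1) : ℕ) : ℝ) -
        (-(((k : ℝ) - (m : ℝ)) * Real.log 2) +
          Real.sqrt (((k : ℝ) - (m : ℝ)) ^ 2 * Real.log 2 ^ 2 +
            2 * ((k : ℝ) - (m : ℝ)) * ((2 ^ k - 2 ^ (k - m - 1) : ℕ) : ℝ) * Real.log 2))) :
    ¬ IsSatisfactory k (SCode k n) :=
  stmt15_general k m n hm1 hm2 hn1 hn2
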